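/- If A and B are positive semidefinite n×n complex matrices and X is any n×n complex matrix, then for every j: s_j(A^{1/2} X B^{1/2}) ≤ ‖X‖ · s_j(A ⊕ B). -/

import Mathlib

open Matrix
open scoped ComplexOrder

/-- The `j`-th largest singular value of a square complex matrix (`j : Fin m`, zero-indexed,
so `sv A 0` is the largest singular value). It is defined as the square root of the `j`-th
largest eigenvalue of `Aᴴ * A`. -/
noncomputable def sv {m : ℕ} (A : Matrix (Fin m) (Fin m) ℂ) (j : Fin m) : ℝ :=
  Real.sqrt ((Matrix.isHermitian_conjTranspose_mul_self A).eigenvalues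
    (Tuple.sort ((Matrix.isHermitian_conjTranspose_mul_self A).eigenvalues) j.rev))

/-- The absolute value `|A| = (Aᴴ A)^{1/2}` of a square complex matrix. -/
noncomputable def matAbs {m : ℕ} (A : Matrix (Fin m) (Fin m) ℂ) : Matrix (Fin m) (Fin m) ℂ :=
  (Matrix.posSemidef_conjTranspose_mul_self A).1.cfc Real.sqrt

/-- The `2n × 2n` block matrix `[[A, B], [C, D]]`, reindexed by `Fin (n + n)`. -/
noncomputable def blk {n : ℕ} (A B C D : Matrix (Fin n) (Fin n) ℂ) :
    Matrix (Fin (n + n)) (Fin (n + n)) ℂ :=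
  Matrix.reindex finSumFinEquiv finSumFinEquiv (Matrix.fromBlocks A B C D)

/-- `f(P)` for a Hermitian matrix `P`, via the spectral functional calculus. -/
noncomputable def herCfc {m : ℕ} {P : Matrix (Fin m) (Fin m) ℂ} (hP : P.IsHermitian)
    (f : ℝ → ℝ) : Matrix (Fin m) (Fin m) ℂ :=
  hP.cfc f

/-- `|A| ^ r` (real power of the absolute value), via the functional calculus. -/
noncomputable def matAbsPow {m : ℕ} (A : Matrix (Fin m) (Fin m) ℂ) (r : ℝ) :
    Matrix (Fin m) (Fin m) ℂ :=
  herCfc (Matrix.isHermitian_iff_isSelfAdjoint.mpr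
    ((Matrix.posSemidef_conjTranspose_mul_self A).1.cfc_eq Real.sqrt ▸ cfc_predicate Real.sqrt (Aᴴ * A))) (fun t => t ^ r)

/-- `f(|A|)`, via the functional calculus. -/
noncomputable def matAbsCfc {m : ℕ} (A : Matrix (Fin m) (Fin m) ℂ) (f : ℝ → ℝ) :
    Matrix (Fin m) (Fin m) ℂ :=
  herCfc (Matrix.isHermitian_iff_isSelfAdjoint.mpr
    ((Matrix.posSemidef_conjTranspose_mul_self A).1.cfc_eq Real.sqrt ▸ cfc_predicate Real.sqrt (Aᴴ * A))) f

/-- The operator norm: the largest singular value. -/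
noncomputable def opNorm {m : ℕ} (A : Matrix (Fin m) (Fin m) ℂ) : ℝ :=
  ⨆ j, sv A j

/-!
Weyl's multiplicative inequality `s (i + k) (M * N) ≤ s i M * s k N`, a consequence of the
subspace (min–max) description of singular values, gives
`s j (A^{1/2} X B^{1/2}) ≤ √(λ i A) * ‖X‖ * √(λ k B)` whenever `i + k = j`.
Let `t = s j (A ⊕ B)`. The eigenvectors of `A` and of `B` with eigenvalue above `t`, placed in
the two blocks, span a subspace on which `A ⊕ B` stretches every vector by more than `t`, so there
are at most `j` of them. Hence `i + k = j` can be chosen with `λ i A ≤ t` and `λ k B ≤ t`.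
-/

open Finset Module
open scoped InnerProductSpace

namespace Antitone

variable {m : ℕ} {f : Fin m → ℝ}

lemma card_filter_lt_le (hf : Antitone f) (j : Fin m) :
    #(univ.filter fun l => f j < f l) ≤ j := by
  calc #(univ.filter fun l => f j < f l) ≤ #(Iio j) :=
        card_le_card fun l hl => mem_Iio.2 <| lt_of_not_ge fun hjl =>
          (hf hjl).not_gt (mem_filter.1 hl).2
    _ = j := Fin.card_Iio j

lemma lt_card_filter_le (hf : Antitone f) (j : Fin m) :
    (j : ℕ) < #(univ.filter fun l => f j ≤ f l) := by
  calc (j : ℕ) < #(Iic j) := by rw [Fin.card_Iic]; omega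
    _ ≤ _ := card_le_card fun l hl => mem_filter.2 ⟨mem_univ l, hf (mem_Iic.1 hl)⟩

lemma le_of_card_filter_lt_le (hf : Antitone f) {t : ℝ} {j : Fin m}
    (h : #(univ.filter fun l => t < f l) ≤ j) : f j ≤ t := by
  by_contra! htj
  have := (hf.lt_card_filter_le j).trans_le <| card_le_card fun l hl =>
    mem_filter.2 ⟨mem_univ l, htj.trans_le (mem_filter.1 hl).2⟩
  omega

lemma exists_add_eq_le_of_card_filter_lt {g : Fin m → ℝ} (hf : Antitone f) (hg : Antitone g)
    {t : ℝ} (j : Fin m)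
    (h : #(univ.filter fun l => t < f l) + #(univ.filter fun l => t < g l) ≤ j) :
    ∃ i k : Fin m, (i : ℕ) + k = j ∧ f i ≤ t ∧ g k ≤ t := by
  set a := #(univ.filter fun l => t < f l)
  refine ⟨⟨a, by omega⟩, ⟨j - a, by omega⟩, by simp only; omega,
    hf.le_of_card_filter_lt_le le_rfl, hg.le_of_card_filter_lt_le (by simp only; omega)⟩

end Antitone

namespace Matrix.IsHermitian

variable {m : ℕ} {H : Matrix (Fin m) (Fin m) ℂ}

noncomputable def eigenvaluesDesc (hH : H.IsHermitian) (j : Fin m) : ℝ :=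
  hH.eigenvalues (Tuple.sort hH.eigenvalues j.rev)

lemma eigenvaluesDesc_antitone (hH : H.IsHermitian) : Antitone hH.eigenvaluesDesc :=
  fun _ _ hab => Tuple.monotone_sort hH.eigenvalues (Fin.rev_le_rev.2 hab)

lemma card_filter_eigenvaluesDesc (hH : H.IsHermitian) (p : ℝ → Prop) [DecidablePred p] :
    #(univ.filter fun l => p (hH.eigenvaluesDesc l)) =
      #(univ.filter fun l => p (hH.eigenvalues l)) :=
  card_equiv (Fin.revPerm.trans (Tuple.sort hH.eigenvalues)) fun _ => by
    simp only [mem_filter, mem_univ, true_and]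
    rfl

end Matrix.IsHermitian

section EigenExpansion

variable {𝕜 E ι : Type*} [RCLike 𝕜] [NormedAddCommGroup E] [InnerProductSpace 𝕜 E] [Fintype ι]
  {T : E →ₗ[𝕜] E} {v : ι → E} {lam : ι → ℝ}

lemma Orthonormal.re_inner_map_sum_smul (hv : Orthonormal 𝕜 v)
    (hT : ∀ w, T (v w) = (lam w : 𝕜) • v w) (c : ι → 𝕜) :
    RCLike.re ⟪∑ w, c w • v w, T (∑ w, c w • v w)⟫_𝕜 = ∑ w, lam w * ‖c w‖ ^ 2 := by
  simp only [map_sum, map_smul, hT, smul_smul, hv.inner_sum]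
  refine Finset.sum_congr rfl fun w _ => ?_
  rw [← mul_assoc, RCLike.conj_mul, ← RCLike.ofReal_pow, ← RCLike.ofReal_mul, RCLike.ofReal_re,
    mul_comm]

lemma Orthonormal.norm_sum_smul_sq (hv : Orthonormal 𝕜 v) (c : ι → 𝕜) :
    ‖∑ w, c w • v w‖ ^ 2 = ∑ w, ‖c w‖ ^ 2 := by
  have h := hv.re_inner_map_sum_smul (T := LinearMap.id) (lam := fun _ => 1) (by simp) c
  simpa only [LinearMap.id_apply, ← @norm_sq_eq_re_inner 𝕜, one_mul] using h

variable {x : E} {t : ℝ}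

lemma Orthonormal.re_inner_map_le_of_mem_span (hv : Orthonormal 𝕜 v)
    (hT : ∀ w, T (v w) = (lam w : 𝕜) • v w) (hlam : ∀ w, lam w ≤ t)
    (hx : x ∈ Submodule.span 𝕜 (Set.range v)) :
    RCLike.re ⟪x, T x⟫_𝕜 ≤ t * ‖x‖ ^ 2 := by
  obtain ⟨c, rfl⟩ := Submodule.mem_span_range_iff_exists_fun 𝕜 |>.1 hx
  rw [hv.re_inner_map_sum_smul hT, hv.norm_sum_smul_sq, mul_sum]
  exact sum_le_sum fun w _ => by gcongr; exact hlam w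

lemma Orthonormal.le_re_inner_map_of_mem_span (hv : Orthonormal 𝕜 v)
    (hT : ∀ w, T (v w) = (lam w : 𝕜) • v w) (hlam : ∀ w, t ≤ lam w)
    (hx : x ∈ Submodule.span 𝕜 (Set.range v)) :
    t * ‖x‖ ^ 2 ≤ RCLike.re ⟪x, T x⟫_𝕜 := by
  obtain ⟨c, rfl⟩ := Submodule.mem_span_range_iff_exists_fun 𝕜 |>.1 hx
  rw [hv.re_inner_map_sum_smul hT, hv.norm_sum_smul_sq, mul_sum]
  exact sum_le_sum fun w _ => by gcongr; exact hlam w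

lemma Orthonormal.lt_re_inner_map_of_mem_span (hv : Orthonormal 𝕜 v)
    (hT : ∀ w, T (v w) = (lam w : 𝕜) • v w) (hlam : ∀ w, t < lam w)
    (hx : x ∈ Submodule.span 𝕜 (Set.range v)) (hx0 : x ≠ 0) :
    t * ‖x‖ ^ 2 < RCLike.re ⟪x, T x⟫_𝕜 := by
  obtain ⟨c, rfl⟩ := Submodule.mem_span_range_iff_exists_fun 𝕜 |>.1 hx
  obtain ⟨w₀, hw₀⟩ : ∃ w, c w ≠ 0 := by
    by_contra! hc
    simp [hc] at hx0
  rw [hv.re_inner_map_sum_smul hT, hv.norm_sum_smul_sq, mul_sum]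
  refine sum_lt_sum (fun w _ => by gcongr; exact (hlam w).le) ⟨w₀, mem_univ _, ?_⟩
  gcongr
  exact hlam w₀

end EigenExpansion

namespace Submodule

variable {K V W : Type*} [DivisionRing K] [AddCommGroup V] [Module K V] [AddCommGroup W]
  [Module K W] [FiniteDimensional K V]

lemma finrank_add_finrank_le_finrank_inf_add (s t : Submodule K V) :
    finrank K s + finrank K t ≤ finrank K ↥(s ⊓ t) + finrank K V := by
  rw [← finrank_sup_add_finrank_inf_eq]
  have := (s ⊔ t).finrank_le
  omega

lemma exists_mem_inf_ne_zero_of_finrank_lt {s t : Submodule K V}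
    (h : finrank K V < finrank K s + finrank K t) : ∃ x ∈ s ⊓ t, x ≠ 0 := by
  refine exists_mem_ne_zero_of_ne_bot fun hbot => ?_
  have := finrank_add_finrank_le_finrank_inf_add s t
  rw [hbot, finrank_bot] at this
  omega

lemma finrank_add_finrank_le_finrank_comap_add [FiniteDimensional K W] (f : V →ₗ[K] W)
    (s : Submodule K W) :
    finrank K s + finrank K V ≤ finrank K (s.comap f) + finrank K W := by
  have hker : s.comap f = LinearMap.ker (s.mkQ ∘ₗ f) := by
    ext x
    simp [Submodule.Quotient.mk_eq_zero]
  have hrange := (LinearMap.range (s.mkQ ∘ₗ f)).finrank_le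
  rw [hker, ← (s.mkQ ∘ₗ f).finrank_range_add_finrank_ker, ← s.finrank_quotient_add_finrank]
  omega

end Submodule

namespace Matrix

variable {m : ℕ}

lemma norm_toEuclideanLin_sq (T : Matrix (Fin m) (Fin m) ℂ) (x : EuclideanSpace ℂ (Fin m)) :
    ‖toEuclideanLin T x‖ ^ 2 = RCLike.re ⟪x, toEuclideanLin (Tᴴ * T) x⟫_ℂ := by
  rw [toLpLin_mul_same, toEuclideanLin_conjTranspose_eq_adjoint, LinearMap.comp_apply,
    LinearMap.adjoint_inner_right, ← inner_self_eq_norm_sq (𝕜 := ℂ)]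

lemma IsHermitian.toEuclideanLin_eigenvectorBasis {H : Matrix (Fin m) (Fin m) ℂ}
    (hH : H.IsHermitian) (l : Fin m) :
    toEuclideanLin H (hH.eigenvectorBasis l) =
      (hH.eigenvalues l : ℂ) • hH.eigenvectorBasis l := by
  rw [toLpLin_apply, hH.mulVec_eigenvectorBasis, RCLike.real_smul_eq_coe_smul (K := ℂ)]
  rfl

end Matrix

section SingularValues

variable {m : ℕ}

lemma sv_nonneg (T : Matrix (Fin m) (Fin m) ℂ) (j : Fin m) : 0 ≤ sv T j :=
  Real.sqrt_nonneg _

lemma sv_sq (T : Matrix (Fin m) (Fin m) ℂ) (j : Fin m) :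
    sv T j ^ 2 = (isHermitian_conjTranspose_mul_self T).eigenvaluesDesc j :=
  Real.sq_sqrt ((posSemidef_conjTranspose_mul_self T).eigenvalues_nonneg _)

lemma sv_eq_sqrt_eigenvaluesDesc {T H : Matrix (Fin m) (Fin m) ℂ} (hH : H.IsHermitian)
    (hTH : Tᴴ * T = H) (j : Fin m) : sv T j = √(hH.eigenvaluesDesc j) := by
  subst hTH
  rfl

lemma sv_le_opNorm (T : Matrix (Fin m) (Fin m) ℂ) (j : Fin m) : sv T j ≤ opNorm T :=
  le_ciSup (Set.finite_range _).bddAbove j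

lemma exists_subspace_forall_norm_le_sv (T : Matrix (Fin m) (Fin m) ℂ) (j : Fin m) :
    ∃ V : Submodule ℂ (EuclideanSpace ℂ (Fin m)), m ≤ finrank ℂ V + j ∧
      ∀ x ∈ V, ‖toEuclideanLin T x‖ ≤ sv T j * ‖x‖ := by
  set hH := isHermitian_conjTranspose_mul_self T
  set S := univ.filter fun l => ¬hH.eigenvaluesDesc j < hH.eigenvalues l
  have hv : Orthonormal ℂ fun l : S => hH.eigenvectorBasis l :=
    hH.eigenvectorBasis.orthonormal.comp _ Subtype.val_injective
  refine ⟨Submodule.span ℂ (Set.range fun l : S => hH.eigenvectorBasis l), ?_, fun x hx => ?_⟩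
  · have hlarge := hH.card_filter_eigenvaluesDesc (hH.eigenvaluesDesc j < ·) ▸
      hH.eigenvaluesDesc_antitone.card_filter_lt_le j
    rw [finrank_span_eq_card hv.linearIndependent, Fintype.card_coe]
    calc m = #(S ∪ univ.filter fun l => hH.eigenvaluesDesc j < hH.eigenvalues l) := by
          rw [eq_univ_of_forall (s := S ∪ _) fun l => by simp [S, le_or_gt], card_univ,
            Fintype.card_fin]
      _ ≤ #S + j := (card_union_le _ _).trans (by gcongr)
  · have hx := hv.re_inner_map_le_of_mem_span (fun l => hH.toEuclideanLin_eigenvectorBasis l)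
      (fun l => not_lt.1 (mem_filter.1 l.2).2) hx
    rw [← norm_toEuclideanLin_sq, ← sv_sq, ← mul_pow] at hx
    exact (pow_le_pow_iff_left₀ (norm_nonneg _) (mul_nonneg (sv_nonneg T j) (norm_nonneg x))
      two_ne_zero).1 hx

lemma sv_le_of_forall_norm_le (T : Matrix (Fin m) (Fin m) ℂ) (j : Fin m)
    {W : Submodule ℂ (EuclideanSpace ℂ (Fin m))} (hW : m ≤ finrank ℂ W + j) {c : ℝ}
    (hc : ∀ x ∈ W, ‖toEuclideanLin T x‖ ≤ c * ‖x‖) : sv T j ≤ c := by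
  set hH := isHermitian_conjTranspose_mul_self T
  set S := univ.filter fun l => hH.eigenvaluesDesc j ≤ hH.eigenvalues l
  have hv : Orthonormal ℂ fun l : S => hH.eigenvectorBasis l :=
    hH.eigenvectorBasis.orthonormal.comp _ Subtype.val_injective
  have hS : (j : ℕ) < #S := hH.card_filter_eigenvaluesDesc (hH.eigenvaluesDesc j ≤ ·) ▸
    hH.eigenvaluesDesc_antitone.lt_card_filter_le j
  obtain ⟨x, ⟨hxS, hxW⟩, hx0⟩ := Submodule.exists_mem_inf_ne_zero_of_finrank_lt
    (s := Submodule.span ℂ (Set.range fun l : S => hH.eigenvectorBasis l)) (t := W) (by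
      rw [finrank_euclideanSpace_fin, finrank_span_eq_card hv.linearIndependent,
        Fintype.card_coe]
      omega)
  have hx := hv.le_re_inner_map_of_mem_span (fun l => hH.toEuclideanLin_eigenvectorBasis l)
    (fun l => (mem_filter.1 l.2).2) hxS
  rw [← norm_toEuclideanLin_sq, ← sv_sq, ← mul_pow] at hx
  have hsx := (pow_le_pow_iff_left₀ (mul_nonneg (sv_nonneg T j) (norm_nonneg x))
    (norm_nonneg _) two_ne_zero).1 hx
  exact le_of_mul_le_mul_right (hsx.trans (hc x hxW)) (norm_pos_iff.2 hx0)

lemma finrank_le_of_forall_sv_mul_lt_norm (T : Matrix (Fin m) (Fin m) ℂ) (j : Fin m)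
    {W : Submodule ℂ (EuclideanSpace ℂ (Fin m))}
    (hW : ∀ x ∈ W, x ≠ 0 → sv T j * ‖x‖ < ‖toEuclideanLin T x‖) : finrank ℂ W ≤ j := by
  obtain ⟨V, hV, hVT⟩ := exists_subspace_forall_norm_le_sv T j
  by_contra! hlt
  obtain ⟨x, ⟨hxV, hxW⟩, hx0⟩ := Submodule.exists_mem_inf_ne_zero_of_finrank_lt (s := V) (t := W)
    (by rw [finrank_euclideanSpace_fin]; omega)
  exact (hW x hxW hx0).not_ge (hVT x hxV)

theorem sv_mul_le (M N : Matrix (Fin m) (Fin m) ℂ) {i k j : Fin m} (hj : (i : ℕ) + k = j) :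
    sv (M * N) j ≤ sv M i * sv N k := by
  obtain ⟨VM, hVM, hM⟩ := exists_subspace_forall_norm_le_sv M i
  obtain ⟨VN, hVN, hN⟩ := exists_subspace_forall_norm_le_sv N k
  have hU : m ≤ finrank ℂ ↥(VN ⊓ VM.comap (toEuclideanLin N)) + j := by
    have hcomap := Submodule.finrank_add_finrank_le_finrank_comap_add (toEuclideanLin N) VM
    have hinf := Submodule.finrank_add_finrank_le_finrank_inf_add VN (VM.comap (toEuclideanLin N))
    rw [finrank_euclideanSpace_fin] at hcomap hinf
    omega
  refine sv_le_of_forall_norm_le _ j hU fun x ⟨hxN, hxM⟩ => ?_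
  calc ‖toEuclideanLin (M * N) x‖ = ‖toEuclideanLin M (toEuclideanLin N x)‖ := by
        rw [toLpLin_mul_same, LinearMap.comp_apply]
    _ ≤ sv M i * ‖toEuclideanLin N x‖ := hM _ hxM
    _ ≤ sv M i * (sv N k * ‖x‖) := mul_le_mul_of_nonneg_left (hN x hxN) (sv_nonneg M i)
    _ = sv M i * sv N k * ‖x‖ := (mul_assoc ..).symm

end SingularValues

lemma Matrix.PosSemidef.conjTranspose_cfc_sqrt_mul_self {m : ℕ} {A : Matrix (Fin m) (Fin m) ℂ}
    (hA : A.PosSemidef) : (hA.1.cfc Real.sqrt)ᴴ * hA.1.cfc Real.sqrt = A := by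
  rw [← hA.1.cfc_eq, ← star_eq_conjTranspose, (cfc_predicate Real.sqrt A).star_eq,
    ← cfc_mul Real.sqrt Real.sqrt A]
  conv_rhs => rw [← cfc_id' ℝ A hA.1.isSelfAdjoint]
  refine cfc_congr fun x hx => Real.mul_self_sqrt ?_
  obtain ⟨i, rfl⟩ := hA.1.spectrum_real_eq_range_eigenvalues ▸ hx
  exact hA.eigenvalues_nonneg i

lemma sv_cfc_sqrt {m : ℕ} {A : Matrix (Fin m) (Fin m) ℂ} (hA : A.PosSemidef) (i : Fin m) :
    sv (hA.1.cfc Real.sqrt) i = √(hA.1.eigenvaluesDesc i) :=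
  sv_eq_sqrt_eigenvaluesDesc hA.1 hA.conjTranspose_cfc_sqrt_mul_self i

section BlockDiagonal

variable {n : ℕ}

noncomputable def blockVec (u v : EuclideanSpace ℂ (Fin n)) : EuclideanSpace ℂ (Fin (n + n)) :=
  WithLp.toLp 2 fun w => Sum.elim u v (finSumFinEquiv.symm w)

lemma inner_blockVec (u v u' v' : EuclideanSpace ℂ (Fin n)) :
    ⟪blockVec u v, blockVec u' v'⟫_ℂ = ⟪u, u'⟫_ℂ + ⟪v, v'⟫_ℂ := by
  simp only [PiLp.inner_apply, ← finSumFinEquiv.sum_comp, Fintype.sum_sum_type, blockVec,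
    Equiv.symm_apply_apply, Sum.elim_inl, Sum.elim_inr]

lemma smul_blockVec (c : ℂ) (u v : EuclideanSpace ℂ (Fin n)) :
    c • blockVec u v = blockVec (c • u) (c • v) := by
  ext w
  rcases h : finSumFinEquiv.symm w with a | a <;> simp [blockVec, h]

lemma toEuclideanLin_blk_blockVec (A B : Matrix (Fin n) (Fin n) ℂ)
    (u v : EuclideanSpace ℂ (Fin n)) :
    toEuclideanLin (blk A 0 0 B) (blockVec u v) =
      blockVec (toEuclideanLin A u) (toEuclideanLin B v) := by
  ext w
  rcases h : finSumFinEquiv.symm w with a | a <;>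
    simp [blk, blockVec, toLpLin_apply, submatrix_mulVec_equiv, fromBlocks_mulVec, h,
      Function.comp_def]

end BlockDiagonal

lemma card_filter_lt_eigenvalues_add_le {n : ℕ} {A B : Matrix (Fin n) (Fin n) ℂ}
    (hA : A.IsHermitian) (hB : B.IsHermitian) (j : Fin (n + n)) :
    #(univ.filter fun a => sv (blk A 0 0 B) j < hA.eigenvalues a) +
      #(univ.filter fun b => sv (blk A 0 0 B) j < hB.eigenvalues b) ≤ j := by
  set t := sv (blk A 0 0 B) j
  set SA := univ.filter fun a => t < hA.eigenvalues a
  set SB := univ.filter fun b => t < hB.eigenvalues b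
  let v : SA ⊕ SB → EuclideanSpace ℂ (Fin (n + n)) :=
    Sum.elim (fun a => blockVec (hA.eigenvectorBasis a) 0)
      (fun b => blockVec 0 (hB.eigenvectorBasis b))
  let lam : SA ⊕ SB → ℝ := Sum.elim (fun a => hA.eigenvalues a) (fun b => hB.eigenvalues b)
  have hv : Orthonormal ℂ v := by
    have hA' := orthonormal_iff_ite.1 hA.eigenvectorBasis.orthonormal
    have hB' := orthonormal_iff_ite.1 hB.eigenvectorBasis.orthonormal
    rw [orthonormal_iff_ite]
    rintro (a | b) (a' | b') <;>
      simp only [v, Sum.elim_inl, Sum.elim_inr, inner_blockVec, inner_zero_left,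
        inner_zero_right, add_zero, zero_add, hA', hB', Sum.inl.injEq, Sum.inr.injEq,
        Subtype.ext_iff, reduceCtorEq, if_false]
  have hvlam : ∀ w, toEuclideanLin (blk A 0 0 B) (v w) = (lam w : ℂ) • v w := by
    rintro (a | b) <;>
      simp only [v, lam, Sum.elim_inl, Sum.elim_inr, toEuclideanLin_blk_blockVec,
        IsHermitian.toEuclideanLin_eigenvectorBasis, map_zero, smul_blockVec, smul_zero]
  have hlam : ∀ w, t < lam w := by
    rintro (a | b)
    exacts [(mem_filter.1 a.2).2, (mem_filter.1 b.2).2]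
  have hW := finrank_le_of_forall_sv_mul_lt_norm (blk A 0 0 B) j
    (W := Submodule.span ℂ (Set.range v)) fun x hx hx0 => by
      have hray := hv.lt_re_inner_map_of_mem_span hvlam hlam hx hx0
      have hxpos : 0 < ‖x‖ := norm_pos_iff.2 hx0
      nlinarith [re_inner_le_norm (𝕜 := ℂ) x (toEuclideanLin (blk A 0 0 B) x)]
  rwa [finrank_span_eq_card hv.linearIndependent, Fintype.card_sum, Fintype.card_coe,
    Fintype.card_coe] at hW

theorem sv_sqrt_product_opNorm {n : ℕ} {A B : Matrix (Fin n) (Fin n) ℂ}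
    (X : Matrix (Fin n) (Fin n) ℂ) (hA : A.PosSemidef) (hB : B.PosSemidef) :
    ∀ j : Fin n, sv (hA.1.cfc Real.sqrt * X * hB.1.cfc Real.sqrt) j ≤
      opNorm X * sv (blk A 0 0 B) (Fin.castAdd n j) := by
  intro j
  set t := sv (blk A 0 0 B) (Fin.castAdd n j)
  obtain ⟨i, k, hik, hAi, hBk⟩ := Antitone.exists_add_eq_le_of_card_filter_lt
    hA.1.eigenvaluesDesc_antitone hB.1.eigenvaluesDesc_antitone j (t := t) (by
      rw [hA.1.card_filter_eigenvaluesDesc (t < ·), hB.1.card_filter_eigenvaluesDesc (t < ·)]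
      exact card_filter_lt_eigenvalues_add_le hA.1 hB.1 (Fin.castAdd n j))
  have hsA : sv (hA.1.cfc Real.sqrt) i ≤ √t := sv_cfc_sqrt hA i ▸ Real.sqrt_le_sqrt hAi
  have hsB : sv (hB.1.cfc Real.sqrt) k ≤ √t := sv_cfc_sqrt hB k ▸ Real.sqrt_le_sqrt hBk
  have hX : sv X ⟨0, j.pos⟩ ≤ opNorm X := sv_le_opNorm X _
  calc sv (hA.1.cfc Real.sqrt * X * hB.1.cfc Real.sqrt) j
      ≤ sv (hA.1.cfc Real.sqrt) i * sv (X * hB.1.cfc Real.sqrt) k := by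
        rw [mul_assoc]
        exact sv_mul_le _ _ hik
    _ ≤ sv (hA.1.cfc Real.sqrt) i * (sv X ⟨0, j.pos⟩ * sv (hB.1.cfc Real.sqrt) k) :=
        mul_le_mul_of_nonneg_left (sv_mul_le _ _ (zero_add _)) (sv_nonneg _ _)
    _ ≤ √t * (opNorm X * √t) := by
        have hXnonneg := (sv_nonneg X _).trans hX
        exact mul_le_mul hsA (mul_le_mul hX hsB (sv_nonneg _ _) hXnonneg)
          (mul_nonneg (sv_nonneg _ _) (sv_nonneg _ _)) (Real.sqrt_nonneg t)
    _ = opNorm X * t := by rw [mul_left_comm, Real.mul_self_sqrt (sv_nonneg _ _)]
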